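/- arXiv:2312.07186 — 4 statements merged into one kernel-verified Lean document; each statement's English description precedes it below -/
import Mathlib

section
/- Let (μ_i)_{i∈I} be a nonincreasing sequence of positive reals indexed by a countable set, let (a_{ij})_{i∈I, j∈J} ∈ ℓ²(I×J), and let 0 ≤ γ ≤ β ≤ 2 with Σ_{i,j} a_{ij}² μ_i^{-β} = B² < ∞. Then for every λ > 0, Σ_{i,j} a_{ij}² (λ/(λ+μ_i))² μ_i^{-γ} ≤ B² λ^{β-γ}. -/
lemma key_ineq {l m t : ℝ} (hl : 0 < l) (hm : 0 < m) (ht : 0 ≤ t) (ht2 : t ≤ 2) :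
    l ^ 2 * m ^ t ≤ (l + m) ^ 2 * l ^ t := by
  have hlm : 0 < l + m := by linarith
  have h1 : m ^ t ≤ (l + m) ^ t :=
    Real.rpow_le_rpow hm.le (by linarith) ht
  have h2 : l ^ (2 - t) ≤ (l + m) ^ (2 - t) :=
    Real.rpow_le_rpow hl.le (by linarith) (by linarith)
  have hl2 : (l : ℝ) ^ 2 = l ^ t * l ^ (2 - t) := by
    rw [← Real.rpow_natCast l 2, ← Real.rpow_add hl]
    norm_num
  have hlm2 : ((l + m) : ℝ) ^ 2 = (l + m) ^ t * (l + m) ^ (2 - t) := by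
    rw [← Real.rpow_natCast (l + m) 2, ← Real.rpow_add hlm]
    norm_num
  rw [hl2, hlm2]
  calc l ^ t * l ^ (2 - t) * m ^ t ≤ l ^ t * (l + m) ^ (2 - t) * (l + m) ^ t := by
        apply mul_le_mul
        · exact mul_le_mul_of_nonneg_left h2 (Real.rpow_nonneg hl.le t)
        · exact h1
        · exact Real.rpow_nonneg hm.le t
        · positivity
    _ = (l + m) ^ t * (l + m) ^ (2 - t) * l ^ t := by ring

/-- Coordinate form of the bias bound: if `(μ_i)` is a nonincreasing sequence of positive
reals, `(a_{ij}) ∈ ℓ²` with `Σ a_{ij}² μ_i^{-β} = B²`, and `0 ≤ γ ≤ β ≤ 2`, then for every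
`λ > 0`, `Σ a_{ij}² (λ/(λ+μ_i))² μ_i^{-γ} ≤ B² λ^{β-γ}`. -/
theorem stmt3 {J : Type*} [Countable J]
    (μ : ℕ → ℝ) (hμpos : ∀ i, 0 < μ i) (hmono : Antitone μ)
    (a : ℕ × J → ℝ) (β γ B lam : ℝ)
    (hγ : 0 ≤ γ) (hγβ : γ ≤ β) (hβ : β ≤ 2)
    (hB : HasSum (fun p : ℕ × J => (a p) ^ 2 * (μ p.1) ^ (-β)) (B ^ 2))
    (hlam : 0 < lam) :
    ∑' p : ℕ × J, (a p) ^ 2 * (lam / (lam + μ p.1)) ^ 2 * (μ p.1) ^ (-γ)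
      ≤ B ^ 2 * lam ^ (β - γ) := by
  have hpt : ∀ p : ℕ × J,
      (a p) ^ 2 * (lam / (lam + μ p.1)) ^ 2 * (μ p.1) ^ (-γ)
        ≤ (a p) ^ 2 * (μ p.1) ^ (-β) * lam ^ (β - γ) := by
    intro p
    set m := μ p.1 with hm
    have hmpos : 0 < m := hμpos p.1
    have hlm : 0 < lam + m := by linarith
    have key : lam ^ 2 * m ^ (β - γ) ≤ (lam + m) ^ 2 * lam ^ (β - γ) :=
      key_ineq hlam hmpos (by linarith) (by linarith)
    have hmg : m ^ (-γ) = m ^ (-β) * m ^ (β - γ) := by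
      rw [← Real.rpow_add hmpos]; ring_nf
    have h2 : (lam / (lam + m)) ^ 2 * m ^ (β - γ) ≤ lam ^ (β - γ) := by
      rw [div_pow, div_mul_eq_mul_div, div_le_iff₀ (by positivity)]
      linarith [key]
    calc (a p) ^ 2 * (lam / (lam + m)) ^ 2 * m ^ (-γ)
        = (a p) ^ 2 * m ^ (-β) * ((lam / (lam + m)) ^ 2 * m ^ (β - γ)) := by
          rw [hmg]; ring
      _ ≤ (a p) ^ 2 * m ^ (-β) * lam ^ (β - γ) := by
          apply mul_le_mul_of_nonneg_left h2
          positivity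
  have hsum2 : Summable (fun p : ℕ × J => (a p) ^ 2 * (μ p.1) ^ (-β) * lam ^ (β - γ)) :=
    hB.summable.mul_right _
  have hsum1 : Summable (fun p : ℕ × J =>
      (a p) ^ 2 * (lam / (lam + μ p.1)) ^ 2 * (μ p.1) ^ (-γ)) := by
    apply Summable.of_nonneg_of_le (fun p => by have := hμpos p.1; positivity) hpt hsum2
  calc ∑' p : ℕ × J, (a p) ^ 2 * (lam / (lam + μ p.1)) ^ 2 * (μ p.1) ^ (-γ)
      ≤ ∑' p : ℕ × J, (a p) ^ 2 * (μ p.1) ^ (-β) * lam ^ (β - γ) :=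
        Summable.tsum_le_tsum hpt hsum1 hsum2
    _ = B ^ 2 * lam ^ (β - γ) := by
        rw [tsum_mul_right, hB.tsum_eq]
end

section
/- Let (μ_i)_{i∈I} be positive reals with μ_i ≤ c₁ i^{-1/p} for all i ∈ I ⊆ ℕ₊, where c₁ > 0 and 0 < p < 1. Then there exists a constant D > 0 such that for all λ > 0, the effective dimension N(λ) := Σ_i μ_i/(μ_i + λ) satisfies N(λ) ≤ D λ^{-p}. -/
open Real Set

/-! Each term of `N(λ)` is at most `min(1, T^s (i+1)^(-s))` with `s = 1/p` and `T = (c₁/λ)^p`.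
The first `⌊T⌋` terms contribute at most `T`; by the integral test the rest contribute at most
`T^s · s/(s-1) · (⌊T⌋+1)^(1-s) ≤ s/(s-1) · T`. -/

lemma tsum_nat_add_rpow_neg_le {s : ℝ} (hs : 1 < s) {N : ℕ} (hN : 0 < N) :
    ∑' k : ℕ, ((k + N : ℕ) : ℝ) ^ (-s) ≤ s / (s - 1) * (N : ℝ) ^ (1 - s) := by
  have hN' : (0 : ℝ) < N := by exact_mod_cast hN
  have hsum : Summable fun k : ℕ ↦ ((k + N : ℕ) : ℝ) ^ (-s) :=
    (summable_nat_add_iff N).2 (Real.summable_nat_rpow.2 (by linarith))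
  have hanti : AntitoneOn (fun x : ℝ ↦ x ^ (-s)) (Ici (N : ℝ)) := fun x hx y _ hxy ↦
    rpow_le_rpow_of_nonpos (hN'.trans_le hx) hxy (by linarith)
  have htail : ∑' k : ℕ, ((k + 1 + N : ℕ) : ℝ) ^ (-s) ≤ (N : ℝ) ^ (1 - s) / (s - 1) := by
    calc ∑' k : ℕ, ((k + 1 + N : ℕ) : ℝ) ^ (-s) = ∑' k : ℕ, ((k + N + 1 : ℕ) : ℝ) ^ (-s) := by
          simp only [Nat.add_right_comm]
      _ ≤ ∫ x in Ioi (N : ℝ), x ^ (-s) :=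
          hanti.tsum_comp_add_le_integral N (integrableOn_Ioi_rpow_of_lt (by linarith) hN')
            fun x hx ↦ rpow_nonneg (hN'.le.trans hx.le) _
      _ = (N : ℝ) ^ (1 - s) / (s - 1) := by
          rw [integral_Ioi_rpow_of_lt (by linarith) hN', show -s + 1 = 1 - s by ring, neg_div,
            ← div_neg, neg_sub]
  have hhead : ((0 + N : ℕ) : ℝ) ^ (-s) ≤ (N : ℝ) ^ (1 - s) := by
    rw [zero_add]
    exact rpow_le_rpow_of_exponent_le (by exact_mod_cast hN) (by linarith)
  rw [hsum.tsum_eq_zero_add]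
  calc _ ≤ (N : ℝ) ^ (1 - s) + (N : ℝ) ^ (1 - s) / (s - 1) := add_le_add hhead htail
    _ = s / (s - 1) * (N : ℝ) ^ (1 - s) := by
      have : s - 1 ≠ 0 := by linarith
      field_simp
      ring

lemma tsum_le_of_le_one_of_le_rpow {f : ℕ → ℝ} {s T : ℝ} (hs : 1 < s) (hT : 0 < T)
    (hf0 : ∀ i, 0 ≤ f i) (hf1 : ∀ i, f i ≤ 1)
    (hfT : ∀ i, f i ≤ T ^ s * ((i + 1 : ℕ) : ℝ) ^ (-s)) :
    ∑' i, f i ≤ (1 + s / (s - 1)) * T := by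
  set n := ⌊T⌋₊
  have hdecay : Summable fun i : ℕ ↦ T ^ s * ((i + 1 : ℕ) : ℝ) ^ (-s) :=
    ((summable_nat_add_iff 1).2 (summable_nat_rpow.2 (by linarith))).mul_left _
  have hf : Summable f := hdecay.of_nonneg_of_le hf0 hfT
  have hhead : ∑ i ∈ Finset.range n, f i ≤ T :=
    calc ∑ i ∈ Finset.range n, f i ≤ ∑ _i ∈ Finset.range n, (1 : ℝ) :=
          Finset.sum_le_sum fun i _ ↦ hf1 i
      _ ≤ T := by simpa using Nat.floor_le hT.le
  have htail : ∑' k, f (k + n) ≤ s / (s - 1) * T :=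
    calc ∑' k, f (k + n) ≤ ∑' k : ℕ, T ^ s * ((k + (n + 1) : ℕ) : ℝ) ^ (-s) :=
          ((summable_nat_add_iff n).2 hf).tsum_le_tsum (fun k ↦ hfT (k + n))
            ((summable_nat_add_iff n).2 hdecay)
      _ = T ^ s * ∑' k : ℕ, ((k + (n + 1) : ℕ) : ℝ) ^ (-s) := tsum_mul_left
      _ ≤ T ^ s * (s / (s - 1) * ((n + 1 : ℕ) : ℝ) ^ (1 - s)) := by
          gcongr
          exact tsum_nat_add_rpow_neg_le hs n.succ_pos
      _ ≤ T ^ s * (s / (s - 1) * T ^ (1 - s)) := by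
          gcongr T ^ s * (_ * ?_)
          exact rpow_le_rpow_of_nonpos hT (by exact_mod_cast (Nat.lt_floor_add_one T).le)
            (by linarith)
      _ = s / (s - 1) * T := by
          rw [mul_left_comm, ← rpow_add hT, add_sub_cancel, rpow_one]
  rw [← hf.sum_add_tsum_nat_add n]
  linarith

/-- Effective-dimension bound under polynomial eigenvalue decay: if `μ_i ≤ c₁ i^{-1/p}`
with `c₁ > 0` and `0 < p < 1`, then there is `D > 0` with
`N(λ) = Σ_i μ_i/(μ_i+λ) ≤ D λ^{-p}` for all `λ > 0`. -/
theorem stmt6 (μ : ℕ+ → ℝ) (c₁ p : ℝ) (hc : 0 < c₁) (hp0 : 0 < p) (hp1 : p < 1)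
    (hpos : ∀ i, 0 < μ i)
    (hdecay : ∀ i : ℕ+, μ i ≤ c₁ * ((i : ℕ) : ℝ) ^ (-(1 / p))) :
    ∃ D > (0 : ℝ), ∀ lam : ℝ, 0 < lam →
      ∑' i : ℕ+, μ i / (μ i + lam) ≤ D * lam ^ (-p) := by
  set s := 1 / p
  have hs : 1 < s := (one_lt_div hp0).mpr hp1
  have hD : 0 < 1 + s / (s - 1) := by
    have : 0 < s / (s - 1) := div_pos (by linarith) (by linarith)
    linarith
  refine ⟨(1 + s / (s - 1)) * c₁ ^ p, mul_pos hD (rpow_pos_of_pos hc p), fun lam hlam ↦ ?_⟩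
  have hcl : 0 < c₁ / lam := div_pos hc hlam
  have hTs : ((c₁ / lam) ^ p) ^ s = c₁ / lam := by
    rw [show s = p⁻¹ from one_div p, rpow_rpow_inv hcl.le hp0.ne']
  have hT : c₁ ^ p * lam ^ (-p) = (c₁ / lam) ^ p := by
    rw [div_rpow hc.le hlam.le, rpow_neg hlam.le, div_eq_mul_inv]
  rw [mul_assoc, hT, ← Equiv.pnatEquivNat.symm.tsum_eq]
  refine tsum_le_of_le_one_of_le_rpow hs (rpow_pos_of_pos hcl p) (fun i ↦ ?_) (fun i ↦ ?_)
    (fun i ↦ ?_) <;> have hμ := hpos (Equiv.pnatEquivNat.symm i)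
  · positivity
  · exact div_le_one_of_le₀ (by linarith) (by positivity)
  · calc _ ≤ μ (Equiv.pnatEquivNat.symm i) / lam :=
          div_le_div_of_nonneg_left hμ.le hlam (by linarith)
      _ ≤ c₁ * ((i + 1 : ℕ) : ℝ) ^ (-s) / lam := by
          gcongr
          exact hdecay _
      _ = _ := by rw [hTs]; ring
end

section
/- Let 𝒴 be a separable Hilbert space with orthonormal basis (d_j)_{j∈J}, and let (e_i)_{i∈I} be measurable functions on a probability space (E, π) with Σ_{i∈I} μ_i^α e_i(x)² ≤ A² for π-almost all x, where μ_i > 0. Then every function F(x) = Σ_{i,j} b_{ij} d_j μ_i^{α/2} e_i(x) with Σ_{i,j} b_{ij}² ≤ 1 satisfies ‖F(x)‖_𝒴 ≤ A for π-almost all x. -/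
/-!
Fix `x`, put `c i = μ i ^ (α / 2) * e i x` and `y = F x`. Pairing the expansion of `y` with `y`
gives `‖y‖² = ∑ b_{ij} c_i ⟪d_j, y⟫`, and by Parseval the family `c_i ⟪d_j, y⟫` has squared
`ℓ²(I × J)`-norm `(∑ c_i²) ‖y‖² ≤ A² ‖y‖²`. Cauchy–Schwarz gives `‖y‖² ≤ A ‖y‖`.
-/

open MeasureTheory

lemma Real.tsum_mul_le_sqrt_mul_sqrt {P : Type*} (f g : P → ℝ) (hf : Summable fun p => f p ^ 2)
    (hg : Summable fun p => g p ^ 2) :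
    ∑' p, f p * g p ≤ √(∑' p, f p ^ 2) * √(∑' p, g p ^ 2) := by
  refine tsum_le_of_sum_le' (by positivity) fun s => ?_
  calc ∑ p ∈ s, f p * g p
      ≤ √(∑ p ∈ s, f p ^ 2) * √(∑ p ∈ s, g p ^ 2) := Real.sum_mul_le_sqrt_mul_sqrt s f g
    _ ≤ √(∑' p, f p ^ 2) * √(∑' p, g p ^ 2) := by
      gcongr
      · exact hf.sum_le_tsum s fun _ _ => sq_nonneg _
      · exact hg.sum_le_tsum s fun _ _ => sq_nonneg _

namespace HilbertBasis

variable {κ Y : Type*} [NormedAddCommGroup Y] [InnerProductSpace ℝ Y]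

lemma hasSum_inner_sq (d : HilbertBasis κ ℝ Y) (y : Y) :
    HasSum (fun j => inner ℝ (d j) y ^ 2) (‖y‖ ^ 2) := by
  simpa only [real_inner_comm y, ← sq, real_inner_self_eq_norm_sq] using
    d.hasSum_inner_mul_inner y y

lemma norm_le_of_hasSum_smul {ι : Type*} (d : HilbertBasis κ ℝ Y) {b : ι × κ → ℝ} {c : ι → ℝ}
    {y : Y} (hb : Summable fun p => b p ^ 2) (hc : Summable fun i => c i ^ 2)
    (hy : HasSum (fun p : ι × κ => (b p * c p.1) • d p.2) y) :
    ‖y‖ ≤ √(∑' p, b p ^ 2) * √(∑' i, c i ^ 2) := by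
  set g : ι × κ → ℝ := fun p => c p.1 * inner ℝ (d p.2) y
  have hg : HasSum (fun p => g p ^ 2) ((∑' i, c i ^ 2) * ‖y‖ ^ 2) := by
    have hParseval := d.hasSum_inner_sq y
    have hprod := hc.hasSum.mul hParseval
      (hc.mul_of_nonneg hParseval.summable (fun _ => sq_nonneg _) fun _ => sq_nonneg _)
    exact hprod.congr_fun fun p => mul_pow _ _ 2
  have hpair : HasSum (fun p => b p * g p) (‖y‖ ^ 2) := by
    have := (innerSL ℝ y).hasSum hy
    simp only [innerSL_apply_apply, real_inner_smul_right, real_inner_self_eq_norm_sq] at this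
    refine this.congr_fun fun p => ?_
    simp only [g, real_inner_comm y]
    ring
  set K := √(∑' p, b p ^ 2) * √(∑' i, c i ^ 2)
  have hsq : ‖y‖ ^ 2 ≤ K * ‖y‖ :=
    calc ‖y‖ ^ 2 = ∑' p, b p * g p := hpair.tsum_eq.symm
      _ ≤ √(∑' p, b p ^ 2) * √(∑' p, g p ^ 2) :=
        Real.tsum_mul_le_sqrt_mul_sqrt b g hb hg.summable
      _ = K * ‖y‖ := by
        rw [hg.tsum_eq, Real.sqrt_mul (tsum_nonneg fun _ => sq_nonneg _),
          Real.sqrt_sq (norm_nonneg y), mul_assoc]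
  rcases (norm_nonneg y).eq_or_lt with hy0 | hypos
  · rw [← hy0]
    positivity
  · exact le_of_mul_le_mul_right (by rwa [← sq]) hypos

end HilbertBasis

theorem stmt9_general {E Y ι κ : Type*} [MeasurableSpace E]
    [NormedAddCommGroup Y] [InnerProductSpace ℝ Y]
    (π : Measure E)
    (d : HilbertBasis κ ℝ Y)
    (μ : ι → ℝ) (hμ : ∀ i, 0 < μ i)
    (e : ι → E → ℝ)
    (α A : ℝ) (hA : 0 ≤ A)
    (hbound : ∀ᵐ x ∂π, Summable (fun i => (μ i) ^ α * (e i x) ^ 2) ∧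
      ∑' i, (μ i) ^ α * (e i x) ^ 2 ≤ A ^ 2)
    (b : ι × κ → ℝ) (hb : Summable (fun p => (b p) ^ 2)) (hb1 : ∑' p, (b p) ^ 2 ≤ 1)
    (F : E → Y)
    (hF : ∀ᵐ x ∂π,
      HasSum (fun p : ι × κ => (b p * (μ p.1) ^ (α / 2) * e p.1 x) • d p.2) (F x)) :
    ∀ᵐ x ∂π, ‖F x‖ ≤ A := by
  filter_upwards [hbound, hF] with x ⟨hsum, hle⟩ hFx
  have hsq : ∀ i, (μ i ^ (α / 2) * e i x) ^ 2 = μ i ^ α * e i x ^ 2 := fun i => by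
    rw [mul_pow, ← Real.rpow_mul_natCast (hμ i).le]
    norm_num
  have hcoef : ∑' i, (μ i ^ (α / 2) * e i x) ^ 2 ≤ A ^ 2 := by simpa only [hsq] using hle
  calc ‖F x‖
      ≤ √(∑' p, b p ^ 2) * √(∑' i, (μ i ^ (α / 2) * e i x) ^ 2) :=
        d.norm_le_of_hasSum_smul hb (by simpa only [hsq] using hsum)
          (by simpa only [mul_assoc] using hFx)
    _ ≤ 1 * A := by
      gcongr
      · exact Real.sqrt_le_one.mpr hb1
      · exact Real.sqrt_le_sqrt hcoef |>.trans_eq (Real.sqrt_sq hA)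
    _ = A := one_mul A

/-- The scalar embedding property transfers to the vector-valued setting: if
`Σ_i μ_i^α e_i(x)² ≤ A²` for π-a.e. `x`, then every
`F(x) = Σ_{i,j} b_{ij} d_j μ_i^{α/2} e_i(x)` with `Σ b_{ij}² ≤ 1` satisfies
`‖F(x)‖_𝒴 ≤ A` for π-a.e. `x`. -/
theorem stmt9 {E Y ι κ : Type*} [MeasurableSpace E]
    [NormedAddCommGroup Y] [InnerProductSpace ℝ Y] [CompleteSpace Y]
    (π : Measure E) [IsProbabilityMeasure π]
    (d : HilbertBasis κ ℝ Y)
    (μ : ι → ℝ) (hμ : ∀ i, 0 < μ i)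
    (e : ι → E → ℝ) (hmeas : ∀ i, Measurable (e i))
    (α A : ℝ) (hA : 0 ≤ A)
    (hbound : ∀ᵐ x ∂π, Summable (fun i => (μ i) ^ α * (e i x) ^ 2) ∧
      ∑' i, (μ i) ^ α * (e i x) ^ 2 ≤ A ^ 2)
    (b : ι × κ → ℝ) (hb : Summable (fun p => (b p) ^ 2)) (hb1 : ∑' p, (b p) ^ 2 ≤ 1)
    (F : E → Y)
    (hF : ∀ᵐ x ∂π,
      HasSum (fun p : ι × κ => (b p * (μ p.1) ^ (α / 2) * e p.1 x) • d p.2) (F x)) :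
    ∀ᵐ x ∂π, ‖F x‖ ≤ A :=
  stmt9_general π d μ hμ e α A hA hbound b hb hb1 F hF
end

section
/- Let H be a separable Hilbert space, (μ_i)_{i∈I} positive reals with orthonormal vectors (u_i)_{i∈I} in H spanning a closed subspace K, and C = Σ_i μ_i ⟨·,u_i⟩ u_i. Let 𝒴 be a separable Hilbert space and F ∈ S₂(H, 𝒴). For 0 ≤ γ ≤ 1 define the γ-seminorm ‖F‖_γ² := Σ_{i∈I} μ_i^{1−γ} ‖F u_i‖²_𝒴. Then ‖F‖_γ ≤ ‖F C^{(1−γ)/2}‖_{S₂(H,𝒴)}, with equality if γ < 1 or if F vanishes on K^⊥. -/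
/-!
With `T = F ∘ S` one has `μ_i^{1-γ} ‖F u_i‖² = ‖T u_i‖²`, so the claim compares the
Hilbert–Schmidt sum of `T` over the orthonormal family `(u_i)` with its sum over a Hilbert basis.
That sum does not depend on the basis (by Parseval both equal `Σ_j ‖T* c_j‖²` for a Hilbert
basis `(c_j)` of `𝒴`), so extending `(u_i)` to a Hilbert basis exhibits the left side as a
partial sum of the right, with equality as soon as `T` vanishes on `K^⊥`: this holds when
`γ < 1` (`S = 0` there) or when `F` vanishes on `K^⊥` (`S = id` there). The sums are compared
in `ℝ≥0∞`; the right side is finite because `Σ_k ‖F S b_k‖² ≤ ‖S‖² Σ_k ‖F b_k‖²`.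
-/

theorem ENNReal.ofReal_tsum_norm_sq {α E : Type*} [SeminormedAddGroup E] {f : α → E}
    (hf : Summable fun a => ‖f a‖ ^ 2) :
    ENNReal.ofReal (∑' a, ‖f a‖ ^ 2) = ∑' a, ‖f a‖ₑ ^ 2 := by
  rw [ENNReal.ofReal_tsum_of_nonneg (fun _ => by positivity) hf]
  simp only [ENNReal.ofReal_pow (norm_nonneg _), ofReal_norm]

theorem tsum_norm_sq_eq_toReal_tsum_enorm_sq {α E : Type*} [SeminormedAddGroup E] (f : α → E) :
    ∑' a, ‖f a‖ ^ 2 = (∑' a, ‖f a‖ₑ ^ 2).toReal := by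
  rw [ENNReal.tsum_toReal_eq fun _ => by finiteness]
  simp [ENNReal.toReal_pow]

theorem tsum_subtype_eq_of_subset {α β : Type*} [AddCommMonoid α] [TopologicalSpace α]
    {f : β → α} {s t : Set β} (hst : s ⊆ t) (hf : ∀ x ∈ t, x ∉ s → f x = 0) :
    ∑' x : s, f x = ∑' x : t, f x := by
  rw [tsum_subtype, tsum_subtype]
  congr 1
  ext x
  by_cases hs : x ∈ s
  · simp [hs, hst hs]
  · by_cases ht : x ∈ t <;> simp [hs, ht, hf]

section HilbertSchmidt

open ContinuousLinearMap

variable {𝕜 E F G α β κ κ' : Type*} [RCLike 𝕜]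
  [NormedAddCommGroup E] [InnerProductSpace 𝕜 E]

theorem HilbertBasis.tsum_enorm_inner_sq (b : HilbertBasis κ 𝕜 E) (x : E) :
    ∑' k, ‖inner 𝕜 (b k) x‖ₑ ^ 2 = ‖x‖ₑ ^ 2 := by
  have h := lp.hasSum_norm (p := 2) (by norm_num) (b.repr x)
  simp only [b.repr.norm_map, HilbertBasis.repr_apply_apply, ENNReal.toReal_ofNat,
    Real.rpow_ofNat] at h
  rw [← ENNReal.ofReal_tsum_norm_sq h.summable, h.tsum_eq, ← ofReal_norm,
    ENNReal.ofReal_pow (norm_nonneg _)]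

variable [CompleteSpace E]
  [NormedAddCommGroup F] [InnerProductSpace 𝕜 F] [CompleteSpace F]
  [NormedAddCommGroup G] [InnerProductSpace 𝕜 G] [CompleteSpace G]

theorem tsum_enorm_sq_apply_eq_tsum_tsum_inner_adjoint (T : E →L[𝕜] F)
    (c : HilbertBasis β 𝕜 F) (v : α → E) :
    ∑' a, ‖T (v a)‖ₑ ^ 2 = ∑' j, ∑' a, ‖inner 𝕜 (v a) (adjoint T (c j))‖ₑ ^ 2 := by
  rw [ENNReal.tsum_comm]
  refine tsum_congr fun a => ?_
  rw [← c.tsum_enorm_inner_sq]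
  refine tsum_congr fun j => ?_
  rw [adjoint_inner_right, ← inner_conj_symm, RCLike.enorm_conj]

theorem HilbertBasis.tsum_enorm_sq_apply_eq_tsum_adjoint (b : HilbertBasis κ 𝕜 E)
    (c : HilbertBasis β 𝕜 F) (T : E →L[𝕜] F) :
    ∑' k, ‖T (b k)‖ₑ ^ 2 = ∑' j, ‖adjoint T (c j)‖ₑ ^ 2 := by
  rw [tsum_enorm_sq_apply_eq_tsum_tsum_inner_adjoint T c b]
  exact tsum_congr fun j => b.tsum_enorm_inner_sq _

theorem HilbertBasis.tsum_enorm_sq_apply_eq (b : HilbertBasis κ 𝕜 E)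
    (b' : HilbertBasis κ' 𝕜 E) (T : E →L[𝕜] F) :
    ∑' k, ‖T (b k)‖ₑ ^ 2 = ∑' k, ‖T (b' k)‖ₑ ^ 2 := by
  obtain ⟨w, c, -⟩ := exists_hilbertBasis 𝕜 F
  rw [b.tsum_enorm_sq_apply_eq_tsum_adjoint c, b'.tsum_enorm_sq_apply_eq_tsum_adjoint c]

theorem HilbertBasis.tsum_enorm_sq_comp_apply_le (b : HilbertBasis κ 𝕜 E)
    (b' : HilbertBasis κ' 𝕜 G) (A : G →L[𝕜] F) (B : E →L[𝕜] G) :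
    ∑' k, ‖A (B (b k))‖ₑ ^ 2 ≤ ‖B‖ₑ ^ 2 * ∑' k, ‖A (b' k)‖ₑ ^ 2 := by
  obtain ⟨w, c, -⟩ := exists_hilbertBasis 𝕜 F
  rw [show ∑' k, ‖A (B (b k))‖ₑ ^ 2 = ∑' j, ‖adjoint (A ∘L B) (c j)‖ₑ ^ 2 from
    b.tsum_enorm_sq_apply_eq_tsum_adjoint c (A ∘L B), b'.tsum_enorm_sq_apply_eq_tsum_adjoint c,
    ← ENNReal.tsum_mul_left]
  refine ENNReal.tsum_le_tsum fun j => ?_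
  rw [adjoint_comp, comp_apply, ← LinearIsometryEquiv.enorm_map adjoint B, ← mul_pow]
  gcongr
  exact le_opENorm _ _

theorem Orthonormal.tsum_enorm_sq_apply_le {v : α → E} (hv : Orthonormal 𝕜 v)
    (b : HilbertBasis κ 𝕜 E) (T : E →L[𝕜] F) :
    ∑' a, ‖T (v a)‖ₑ ^ 2 ≤ ∑' k, ‖T (b k)‖ₑ ^ 2 := by
  obtain ⟨w, bw, hvw, hbw⟩ := hv.toSubtypeRange.exists_hilbertBasis_extension
  calc ∑' a, ‖T (v a)‖ₑ ^ 2 = ∑' x : Set.range v, ‖T x‖ₑ ^ 2 :=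
        (tsum_range (fun x => ‖T x‖ₑ ^ 2) hv.linearIndependent.injective).symm
    _ ≤ ∑' x : w, ‖T x‖ₑ ^ 2 := ENNReal.tsum_mono_subtype (fun x => ‖T x‖ₑ ^ 2) hvw
    _ = ∑' k, ‖T (b k)‖ₑ ^ 2 := by rw [← bw.tsum_enorm_sq_apply_eq b T, hbw]

theorem Orthonormal.tsum_enorm_sq_apply_eq {v : α → E} (hv : Orthonormal 𝕜 v)
    (b : HilbertBasis κ 𝕜 E) (T : E →L[𝕜] F)
    (hT : ∀ x, (∀ a, inner 𝕜 (v a) x = 0) → T x = 0) :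
    ∑' a, ‖T (v a)‖ₑ ^ 2 = ∑' k, ‖T (b k)‖ₑ ^ 2 := by
  obtain ⟨w, bw, hvw, hbw⟩ := hv.toSubtypeRange.exists_hilbertBasis_extension
  have hTw : ∀ x ∈ w, x ∉ Set.range v → ‖T x‖ₑ ^ 2 = 0 := by
    intro x hx hxv
    rw [hT x fun a => ?_, enorm_zero, zero_pow two_ne_zero]
    have hne : (⟨v a, hvw ⟨a, rfl⟩⟩ : w) ≠ ⟨x, hx⟩ := fun h => hxv ⟨a, congrArg Subtype.val h⟩
    simpa [hbw] using bw.orthonormal.2 hne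
  calc ∑' a, ‖T (v a)‖ₑ ^ 2 = ∑' x : Set.range v, ‖T x‖ₑ ^ 2 :=
        (tsum_range (fun x => ‖T x‖ₑ ^ 2) hv.linearIndependent.injective).symm
    _ = ∑' x : w, ‖T x‖ₑ ^ 2 := tsum_subtype_eq_of_subset hvw hTw
    _ = ∑' k, ‖T (b k)‖ₑ ^ 2 := by rw [← bw.tsum_enorm_sq_apply_eq b T, hbw]

end HilbertSchmidt

open scoped RealInnerProductSpace

theorem stmt16_general {H Y ι κ : Type*}
    [NormedAddCommGroup H] [InnerProductSpace ℝ H] [CompleteSpace H]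
    [NormedAddCommGroup Y] [InnerProductSpace ℝ Y] [CompleteSpace Y]
    (u : ι → H) (hu : Orthonormal ℝ u)
    (μ : ι → ℝ) (hμ : ∀ i, 0 < μ i)
    (γ : ℝ) (hγ1 : γ ≤ 1)
    (S : H →L[ℝ] H)
    (hSu : ∀ i, S (u i) = ((μ i) ^ ((1 - γ) / 2)) • u i)
    (hSperp : γ < 1 → ∀ x : H, (∀ i, ⟪u i, x⟫ = 0) → S x = 0)
    (hSid : γ = 1 → ∀ x : H, (∀ i, ⟪u i, x⟫ = 0) → S x = x)
    (b : HilbertBasis κ ℝ H) (F : H →L[ℝ] Y)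
    (hFS : Summable fun k => ‖F (b k)‖ ^ 2) :
    (∑' i, (μ i) ^ (1 - γ) * ‖F (u i)‖ ^ 2) ≤ ∑' k, ‖F (S (b k))‖ ^ 2 ∧
    ((γ < 1 ∨ ∀ x : H, (∀ i, ⟪u i, x⟫ = 0) → F x = 0) →
      (∑' i, (μ i) ^ (1 - γ) * ‖F (u i)‖ ^ 2) = ∑' k, ‖F (S (b k))‖ ^ 2) := by
  set T := F ∘L S
  have hTu : ∀ i, μ i ^ (1 - γ) * ‖F (u i)‖ ^ 2 = ‖T (u i)‖ ^ 2 := fun i => by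
    rw [ContinuousLinearMap.comp_apply, hSu, map_smul, norm_smul, mul_pow, Real.norm_eq_abs,
      sq_abs, ← Real.rpow_mul_natCast (hμ i).le]
    norm_num
  have hT_perp (h : γ < 1 ∨ ∀ x : H, (∀ i, ⟪u i, x⟫ = 0) → F x = 0) (x : H)
      (hx : ∀ i, ⟪u i, x⟫ = 0) : T x = 0 := by
    rcases h with hγ | hF
    · simp [T, hSperp hγ x hx]
    · rcases hγ1.lt_or_eq with hγ | hγ
      · simp [T, hSperp hγ x hx]
      · simp [T, hSid hγ x hx, hF x hx]
  have hT_fin : ∑' k, ‖T (b k)‖ₑ ^ 2 ≠ ⊤ :=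
    ne_top_of_le_ne_top (by rw [← ENNReal.ofReal_tsum_norm_sq hFS]; finiteness)
      (b.tsum_enorm_sq_comp_apply_le b F S)
  simp_rw [hTu]
  rw [tsum_norm_sq_eq_toReal_tsum_enorm_sq,
    tsum_norm_sq_eq_toReal_tsum_enorm_sq fun k => F (S (b k))]
  exact ⟨ENNReal.toReal_mono hT_fin (hu.tsum_enorm_sq_apply_le b T),
    fun h => congrArg _ (hu.tsum_enorm_sq_apply_eq b T (hT_perp h))⟩

/-- Norm-transfer lemma: with `C = Σ μ_i ⟨·,u_i⟩ u_i` and `S` the spectrally defined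
fractional power `C^{(1-γ)/2}` (equal to the identity on `K^⊥` when `γ = 1`, zero on `K^⊥`
when `γ < 1`), the γ-seminorm `‖F‖_γ² = Σ μ_i^{1-γ} ‖F u_i‖²` of a Hilbert–Schmidt operator
`F : H → 𝒴` satisfies `‖F‖_γ ≤ ‖F ∘ S‖_{S₂}`, with equality if `γ < 1` or if `F` vanishes
on `K^⊥`. -/
theorem stmt16 {H Y ι κ : Type*}
    [NormedAddCommGroup H] [InnerProductSpace ℝ H] [CompleteSpace H]
    [NormedAddCommGroup Y] [InnerProductSpace ℝ Y] [CompleteSpace Y]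
    (u : ι → H) (hu : Orthonormal ℝ u)
    (μ : ι → ℝ) (hμ : ∀ i, 0 < μ i) (hμs : Summable μ)
    (C : H →L[ℝ] H) (hC : ∀ x : H, HasSum (fun i => (μ i * ⟪u i, x⟫) • u i) (C x))
    (γ : ℝ) (hγ0 : 0 ≤ γ) (hγ1 : γ ≤ 1)
    (S : H →L[ℝ] H)
    (hSu : ∀ i, S (u i) = ((μ i) ^ ((1 - γ) / 2)) • u i)
    (hSperp : γ < 1 → ∀ x : H, (∀ i, ⟪u i, x⟫ = 0) → S x = 0)
    (hSid : γ = 1 → ∀ x : H, (∀ i, ⟪u i, x⟫ = 0) → S x = x)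
    (b : HilbertBasis κ ℝ H) (F : H →L[ℝ] Y)
    (hFS : Summable fun k => ‖F (b k)‖ ^ 2) :
    (∑' i, (μ i) ^ (1 - γ) * ‖F (u i)‖ ^ 2) ≤ ∑' k, ‖F (S (b k))‖ ^ 2 ∧
    ((γ < 1 ∨ ∀ x : H, (∀ i, ⟪u i, x⟫ = 0) → F x = 0) →
      (∑' i, (μ i) ^ (1 - γ) * ‖F (u i)‖ ^ 2) = ∑' k, ‖F (S (b k))‖ ^ 2) :=
  stmt16_general u hu μ hμ γ hγ1 S hSu hSperp hSid b F hFS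
end
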